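/- Let n and C be integers with 1 ≤ n ≤ C, and let K' := { g ∈ GL₂(F) : g₁₁ ∈ 1 + pⁿ, g₁₂ ∈ p^C, g₂₁ ∈ ϖ^{n−C}·o, g₂₂ ∈ o^× }. Assume either L/F is unramified, or L/F is ramified and v(a) = 1. Let R ⊆ o be a set of representatives for o/p^C and R' ⊆ p a set of representatives for p/p^{C+v(a)}. Then the q^C + q^{C+v(a)−1} elements t(1, y) for y ∈ R together with t(x, 1) for x ∈ R' form a complete irredundant set of representatives for the cosets of T(F) ∩ Z(F)·K' in T(F): every element of T(F) lies in t·(T(F) ∩ Z(F)·K') for exactly one t in this family. -/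

import Mathlib

open scoped Pointwise
open Matrix

noncomputable section

abbrev Zm0 : Type := WithZero (Multiplicative ℤ)

/-- `ev n` is the value (in `ℤₘ₀ = WithZero (Multiplicative ℤ)`) of an element of additive
valuation `n`; thus `x ∈ 𝔭^n` iff `v x ≤ ev n`, `x ∈ 𝔬` iff `v x ≤ ev 0`, and `x ∈ 𝔬^×` iff
`v x = ev 0`. -/
def ev (n : ℤ) : Zm0 := ((Multiplicative.ofAdd (-n) : Multiplicative ℤ) : Zm0)

variable {F : Type*} [Field F]

/-- the matrix t(x,y) = [[x, cy],[−ay, x−by]] -/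
def tmat (a b c x y : F) : Matrix (Fin 2) (Fin 2) F :=
  !![x, c * y; -(a * y), x - b * y]

/-- the torus T(F) ⊆ GL₂(F), as a set of matrices -/
def TSet (a b c : F) : Set (Matrix (Fin 2) (Fin 2) F) :=
  {m | ∃ x y : F, x ^ 2 - b * x * y + a * c * y ^ 2 ≠ 0 ∧ m = tmat a b c x y}

/-- Z(F): the invertible scalar matrices -/
def ZF (F : Type*) [Field F] : Set (Matrix (Fin 2) (Fin 2) F) :=
  {m | ∃ z : F, z ≠ 0 ∧ m = z • (1 : Matrix (Fin 2) (Fin 2) F)}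

/-- the compact subgroup
K' = { g : g₁₁ ∈ 1 + 𝔭ⁿ, g₁₂ ∈ 𝔭^C, g₂₁ ∈ ϖ^{n−C}·𝔬, g₂₂ ∈ 𝔬^× } -/
def Kp (v : Valuation F Zm0) (n C : ℕ) : Set (Matrix (Fin 2) (Fin 2) F) :=
  {g | v (g 0 0 - 1) ≤ ev n ∧ v (g 0 1) ≤ ev C ∧
       v (g 1 0) ≤ ev ((n : ℤ) - C) ∧ v (g 1 1) = ev 0}

/-!
`g = t(x₀, y₀)` lies in `t(p, r) · (T ∩ Z K')` exactly when `t(X, Y) := t(p - b r, -r) · g`, which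
is `det t(p, r)` times `t(p, r)⁻¹ g`, satisfies `X ≠ 0` and `Y ∈ 𝔭^C X`. This condition is
homogeneous in `g`, so `g` may be scaled to `t(1, η)` with `η ∈ 𝔬` or to `t(ξ, 1)` with `ξ ∈ 𝔭`.
Writing `N(x, y) = det t(x, y) = x² - bxy + acy²`, the only arithmetic input is that `N(1, y)` is
a unit for `y ∈ 𝔬` and that `v(N(x, 1)) = v(a)` for `x ∈ 𝔭`. Granting it, `t(1, η)` lies in the
coset of `t(1, y)` iff `η ≡ y mod 𝔭^C`, `t(ξ, 1)` lies in that of `t(x, 1)` iff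
`ξ ≡ x mod 𝔭^{C + v(a)}`, and the mixed cases are impossible because there `Y` is a unit while `X`
is integral.

Both facts about `N` come from `N(x, y) = N_{L/F}(x - c y β)`. If `L/F` is unramified, every
primitive element `s + t β` of `𝔬_L` is a unit, so `N` is a unit on primitive pairs (and
`v(a) = 0`). If `L/F` is ramified and `v(a) = 1`, then `β` and `b - c β` are integral, not
divisible by `ϖ`, and their product `a` has `L`-valuation `2`; so both are uniformizers of `L`,
whence `b ∈ 𝔭` and both facts are immediate.
-/

open WithZero

lemma ev_eq_exp (k : ℤ) : ev k = exp (-k) := rfl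

@[simp] lemma ev_le_ev {k l : ℤ} : ev k ≤ ev l ↔ l ≤ k := by
  rw [ev_eq_exp, ev_eq_exp, exp_le_exp, neg_le_neg_iff]

@[simp] lemma ev_lt_ev {k l : ℤ} : ev k < ev l ↔ l < k := by
  rw [ev_eq_exp, ev_eq_exp, exp_lt_exp, neg_lt_neg_iff]

@[simp] lemma ev_zero : ev 0 = 1 := rfl

@[simp] lemma ev_ne_zero (k : ℤ) : ev k ≠ 0 := exp_ne_zero

lemma ev_add (k l : ℤ) : ev (k + l) = ev k * ev l := by
  rw [ev_eq_exp, ev_eq_exp, ev_eq_exp, neg_add, exp_add]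

lemma ev_lt_one {k : ℤ} (hk : 0 < k) : ev k < 1 := by
  rwa [← ev_zero, ev_lt_ev]

lemma le_ev_add_one_iff {u : Zm0} {k : ℤ} : u ≤ ev (k + 1) ↔ u < ev k := by
  refine ⟨fun h => h.trans_lt (ev_lt_ev.mpr (by omega)), fun h => ?_⟩
  induction u using expRecOn with
  | zero => exact zero_le
  | exp m =>
    rw [ev_eq_exp, exp_lt_exp] at h
    rw [ev_eq_exp, exp_le_exp]
    omega

lemma le_ev_one_iff {u : Zm0} : u ≤ ev 1 ↔ u < 1 := by
  simpa using le_ev_add_one_iff (u := u) (k := 0)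

section Torus

variable {a b c : F}

@[simp] lemma tmat_apply_zero_zero (x y : F) : tmat a b c x y 0 0 = x := rfl
@[simp] lemma tmat_apply_zero_one (x y : F) : tmat a b c x y 0 1 = c * y := rfl
@[simp] lemma tmat_apply_one_zero (x y : F) : tmat a b c x y 1 0 = -(a * y) := rfl
@[simp] lemma tmat_apply_one_one (x y : F) : tmat a b c x y 1 1 = x - b * y := rfl

lemma tmat_mul (x y x' y' : F) :
    tmat a b c x y * tmat a b c x' y' =
      tmat a b c (x * x' - a * c * y * y') (x * y' + x' * y - b * y * y') := by
  ext i j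
  fin_cases i <;> fin_cases j <;> simp [tmat, Matrix.mul_apply] <;> ring

lemma tmat_mul_comm (x y x' y' : F) :
    tmat a b c x y * tmat a b c x' y' = tmat a b c x' y' * tmat a b c x y := by
  rw [tmat_mul, tmat_mul]; congr 1 <;> ring

lemma smul_tmat (k x y : F) : k • tmat a b c x y = tmat a b c (k * x) (k * y) := by
  ext i j
  fin_cases i <;> fin_cases j <;> simp [tmat] <;> ring

lemma tmat_one_zero : tmat a b c 1 0 = 1 := by
  rw [tmat, Matrix.one_fin_two]; simp

lemma det_tmat (x y : F) : (tmat a b c x y).det = x ^ 2 - b * x * y + a * c * y ^ 2 := by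
  rw [tmat, Matrix.det_fin_two_of]; ring

lemma det_tmat_one_left (y : F) : (tmat a b c 1 y).det = 1 - b * y + a * c * y ^ 2 := by
  rw [det_tmat]; ring

lemma det_tmat_one_right (x : F) : (tmat a b c x 1).det = x ^ 2 - b * x + a * c := by
  rw [det_tmat]; ring

lemma tmat_mem_TSet {x y : F} (h : (tmat a b c x y).det ≠ 0) : tmat a b c x y ∈ TSet a b c :=
  ⟨x, y, by rwa [← det_tmat], rfl⟩

lemma tmat_mul_tmat_adjugate (p r : F) :
    tmat a b c p r * tmat a b c (p - b * r) (-r) = (tmat a b c p r).det • 1 := by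
  rw [tmat_mul, det_tmat, ← tmat_one_zero, smul_tmat]
  congr 1 <;> ring

end Torus

section Cosets

variable {v : Valuation F Zm0} {a b c : F} {n C : ℕ}

lemma tmat_mem_ZF_mul_Kp_iff (ha : v a ≤ 1) (hb : v b ≤ 1) (hc : v c = 1) (hn : 1 ≤ n)
    (hnC : n ≤ C) {x y : F} :
    tmat a b c x y ∈ ZF F * Kp v n C ↔ x ≠ 0 ∧ v y ≤ ev C * v x := by
  have hC : ev C < 1 := ev_lt_one (by omega)
  rw [Set.mem_mul]
  constructor
  · rintro ⟨_, ⟨z, hz, rfl⟩, k, ⟨hk₀₀, hk₀₁, -, -⟩, hzk⟩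
    have hentry (i j : Fin 2) : tmat a b c x y i j = z * k i j := by
      rw [← hzk, smul_mul_assoc, one_mul, Matrix.smul_apply, smul_eq_mul]
    have hk : v (k 0 0) = 1 := by
      rw [← add_sub_cancel (1 : F) (k 0 0)]
      exact v.map_one_add_of_lt (hk₀₀.trans_lt (ev_lt_one (by omega)))
    have hx : v x = v z := by rw [show x = z * k 0 0 from hentry 0 0, v.map_mul, hk, mul_one]
    refine ⟨fun h => hz (by simpa [h] using hx.symm), ?_⟩
    calc v y = v (c * y) := by rw [v.map_mul, hc, one_mul]
      _ = v z * v (k 0 1) := by rw [show c * y = z * k 0 1 from hentry 0 1, v.map_mul]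
      _ ≤ ev C * v x := by rw [hx, mul_comm]; exact mul_le_mul_left hk₀₁ _
  · rintro ⟨hx, hy⟩
    have hyx : v (y / x) ≤ ev C := by
      rw [map_div₀, div_le_iff₀ (v.pos_iff.mpr hx)]
      exact hy
    refine ⟨x • 1, ⟨x, hx, rfl⟩, tmat a b c 1 (y / x), ⟨?_, ?_, ?_, ?_⟩, ?_⟩
    · simp
    · simpa [hc] using hyx
    · simp only [tmat_apply_one_zero, v.map_neg, v.map_mul]
      calc v a * v (y / x) ≤ 1 * ev C := mul_le_mul' ha hyx
        _ ≤ ev (n - C) := by rw [one_mul, ev_le_ev]; omega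
    · rw [tmat_apply_one_one, ev_zero]
      refine v.map_one_sub_of_lt (lt_of_le_of_lt ?_ hC)
      simpa [v.map_mul] using mul_le_mul' hb hyx
    · rw [smul_mul_assoc, one_mul, smul_tmat, mul_one, mul_div_cancel₀ _ hx]

lemma tmat_injective (hc : c ≠ 0) {x y x' y' : F} (h : tmat a b c x y = tmat a b c x' y') :
    x = x' ∧ y = y' :=
  ⟨by simpa using congrFun (congrFun h 0) 0,
    mul_left_cancel₀ hc (by simpa using congrFun (congrFun h 0) 1)⟩

variable (v a b c C) in
/-- The condition `t(x, y) ∈ t(p, r) · (T ∩ Z K')` in coordinates, where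
`t(X, Y) = t(p - b r, -r) · t(x, y)` is `det t(p, r)` times `t(p, r)⁻¹ t(x, y)`. -/
def CosetCond (p r x y : F) : Prop :=
  (p - b * r) * x + a * c * r * y ≠ 0 ∧
    v (p * y - r * x) ≤ ev C * v ((p - b * r) * x + a * c * r * y)

lemma exists_eq_tmat_mul_iff (ha : v a ≤ 1) (hb : v b ≤ 1) (hc : v c = 1) (hn : 1 ≤ n)
    (hnC : n ≤ C) {p r x y : F} (hpr : (tmat a b c p r).det ≠ 0)
    (hxy : (tmat a b c x y).det ≠ 0) :
    (∃ u ∈ TSet a b c ∩ (ZF F * Kp v n C), tmat a b c x y = tmat a b c p r * u) ↔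
      CosetCond v a b c C p r x y := by
  set D := (tmat a b c p r).det
  have hc0 : c ≠ 0 := v.ne_zero_iff.mp (by simp [hc])
  have hadj : tmat a b c (p - b * r) (-r) * tmat a b c x y =
      tmat a b c ((p - b * r) * x + a * c * r * y) (p * y - r * x) := by
    rw [tmat_mul]; congr 1 <;> ring
  constructor
  · rintro ⟨_, ⟨⟨x', y', -, rfl⟩, hmem⟩, hg⟩
    rw [hg, ← mul_assoc, tmat_mul_comm _ _ p r, tmat_mul_tmat_adjugate, smul_mul_assoc,
      one_mul, smul_tmat] at hadj
    obtain ⟨hX, hY⟩ := tmat_injective hc0 hadj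
    obtain ⟨hx', hy'⟩ := (tmat_mem_ZF_mul_Kp_iff ha hb hc hn hnC).mp hmem
    refine ⟨hX ▸ mul_ne_zero hpr hx', ?_⟩
    rw [← hX, ← hY, v.map_mul, v.map_mul, mul_left_comm]
    exact mul_le_mul_right hy' _
  · rintro ⟨hX, hY⟩
    set X := (p - b * r) * x + a * c * r * y
    set Y := p * y - r * x
    have hu : tmat a b c p r * tmat a b c (D⁻¹ * X) (D⁻¹ * Y) = tmat a b c x y := by
      rw [← smul_tmat, ← hadj, mul_smul_comm, ← mul_assoc, tmat_mul_tmat_adjugate, smul_mul_assoc,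
        one_mul, smul_smul, inv_mul_cancel₀ hpr, one_smul]
    refine ⟨_, ⟨tmat_mem_TSet ?_, ?_⟩, hu.symm⟩
    · intro h
      apply hxy
      rw [← hu, Matrix.det_mul, h, mul_zero]
    · rw [tmat_mem_ZF_mul_Kp_iff ha hb hc hn hnC, v.map_mul, v.map_mul, mul_left_comm]
      exact ⟨mul_ne_zero (inv_ne_zero hpr) hX, mul_le_mul_right hY _⟩

lemma cosetCond_mul_iff {p r x y k : F} (hk : k ≠ 0) :
    CosetCond v a b c C p r (k * x) (k * y) ↔ CosetCond v a b c C p r x y := by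
  have hX : (p - b * r) * (k * x) + a * c * r * (k * y) =
      k * ((p - b * r) * x + a * c * r * y) := by ring
  have hY : p * (k * y) - r * (k * x) = k * (p * y - r * x) := by ring
  rw [CosetCond, CosetCond, hX, hY, v.map_mul, v.map_mul, mul_left_comm,
    mul_le_mul_iff_of_pos_left (v.pos_iff.mpr hk), mul_ne_zero_iff, and_iff_right hk]

lemma not_cosetCond_of_valuation_eq_one (hC : 1 ≤ C) {p r x y : F} (hY : v (p * y - r * x) = 1)
    (hX : v ((p - b * r) * x + a * c * r * y) ≤ 1) : ¬ CosetCond v a b c C p r x y := by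
  rintro ⟨-, h⟩
  rw [hY] at h
  exact (h.trans (mul_le_of_le_one_right' hX)).not_gt (ev_lt_one (by omega))

lemma cosetCond_one_left_one_left_iff (ha : v a ≤ 1) (hb : v b ≤ 1) (hc : v c = 1) (hC : 1 ≤ C)
    {y η : F} (hy : v y ≤ 1) (hη : v η ≤ 1) (hN : v (1 - b * y + a * c * y ^ 2) = 1) :
    CosetCond v a b c C 1 y 1 η ↔ v (η - y) ≤ ev C := by
  have hacy : v (a * c * y) ≤ 1 := by
    simpa [v.map_mul, hc] using mul_le_one' ha hy
  have hX : v (1 - b * y + a * c * y * η) ≤ 1 := by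
    refine v.map_add_le (v.map_sub_le (by simp) ?_) ?_
    · simpa [v.map_mul] using mul_le_one' hb hy
    · simpa [v.map_mul] using mul_le_one' hacy hη
  unfold CosetCond
  simp only [mul_one, one_mul]
  constructor
  · rintro ⟨-, h⟩
    exact h.trans (mul_le_of_le_one_right' hX)
  · intro h
    have hsplit : 1 - b * y + a * c * y * η =
        (1 - b * y + a * c * y ^ 2) + a * c * y * (η - y) := by ring
    have hsmall : v (a * c * y * (η - y)) < v (1 - b * y + a * c * y ^ 2) := by
      rw [hN, v.map_mul]
      exact (mul_le_of_le_one_left' hacy |>.trans h).trans_lt (ev_lt_one (by omega))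
    have hX1 : v (1 - b * y + a * c * y * η) = 1 := by
      rw [hsplit, v.map_add_eq_of_lt_left hsmall, hN]
    exact ⟨fun h0 => by simp [h0] at hX1, by rwa [hX1, mul_one]⟩

lemma not_cosetCond_one_right_one_left (ha : v a ≤ 1) (hb : v b ≤ 1) (hc : v c = 1) (hC : 1 ≤ C)
    {x η : F} (hx : v x < 1) (hη : v η ≤ 1) : ¬ CosetCond v a b c C x 1 1 η := by
  apply not_cosetCond_of_valuation_eq_one hC
  · rw [← v.map_neg, neg_sub, mul_one]
    exact v.map_one_sub_of_lt (by simpa [v.map_mul] using mul_lt_one_of_lt_of_le hx hη)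
  · refine v.map_add_le (by simpa using v.map_sub_le hx.le hb) ?_
    simpa [v.map_mul, hc] using mul_le_one' ha hη

lemma not_cosetCond_one_left_one_right (ha : v a ≤ 1) (hb : v b ≤ 1) (hc : v c = 1) (hC : 1 ≤ C)
    {y ξ : F} (hy : v y ≤ 1) (hξ : v ξ < 1) : ¬ CosetCond v a b c C 1 y ξ 1 := by
  apply not_cosetCond_of_valuation_eq_one hC
  · rw [mul_one, mul_comm]
    exact v.map_one_sub_of_lt (by simpa [v.map_mul] using mul_lt_one_of_lt_of_le hξ hy)
  · refine v.map_add_le ?_ ?_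
    · rw [v.map_mul]
      refine mul_le_one' (v.map_sub_le (by simp) ?_) hξ.le
      simpa [v.map_mul] using mul_le_one' hb hy
    · simpa [v.map_mul, hc] using mul_le_one' ha hy

lemma cosetCond_one_right_one_right_iff (hb : v b ≤ 1) (hC : 1 ≤ C) {x ξ : F} (ha : a ≠ 0)
    (hx : v x ≤ 1) (hN : v (x ^ 2 - b * x + a * c) = v a) :
    CosetCond v a b c C x 1 ξ 1 ↔ v (ξ - x) ≤ ev C * v a := by
  have hC1 : ev C < 1 := ev_lt_one (by omega)
  have hsplit : (x - b * 1) * ξ + a * c * 1 * 1 = (x ^ 2 - b * x + a * c) + (x - b) * (ξ - x) := by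
    ring
  have hY : x * 1 - 1 * ξ = -(ξ - x) := by ring
  have hxb : v (x - b) ≤ 1 := v.map_sub_le hx hb
  unfold CosetCond
  rw [hsplit, hY, v.map_neg]
  constructor
  · rintro ⟨-, h⟩
    have hX : v ((x ^ 2 - b * x + a * c) + (x - b) * (ξ - x)) ≤ max (v a) (v (ξ - x)) := by
      refine (v.map_add _ _).trans (max_le_max hN.le ?_)
      rw [v.map_mul]
      exact mul_le_of_le_one_left' hxb
    rcases le_total (v (ξ - x)) (v a) with hle | hle
    · rw [max_eq_left hle] at hX
      exact h.trans (mul_le_mul_right hX _)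
    · rw [max_eq_right hle] at hX
      have h0 : v (ξ - x) = 0 := by
        by_contra h0
        exact (h.trans (mul_le_mul_right hX _)).not_gt
          (mul_lt_of_lt_one_left (zero_lt_iff.mpr h0) hC1)
      simp [h0]
  · intro h
    have hsmall : v ((x - b) * (ξ - x)) < v (x ^ 2 - b * x + a * c) := by
      rw [hN, v.map_mul]
      exact (mul_le_of_le_one_left' hxb |>.trans h).trans_lt
        (mul_lt_of_lt_one_left (v.pos_iff.mpr ha) hC1)
    have hX : v ((x ^ 2 - b * x + a * c) + (x - b) * (ξ - x)) = v a := by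
      rw [v.map_add_eq_of_lt_left hsmall, hN]
    rw [hX]
    exact ⟨fun h0 => ha (by simpa [h0] using hX.symm), h⟩

end Cosets


lemma existsUnique_or_of_forall_iff {α β : Type*} {f g : α → β} {S S' : Finset α}
    {P : β → Prop} {Q : α → Prop} (hf : ∀ y ∈ S, P (f y) ↔ Q y) (hg : ∀ x ∈ S', ¬ P (g x))
    (hQ : ∃! y, y ∈ S ∧ Q y) :
    ∃! m, ((∃ y ∈ S, m = f y) ∨ (∃ x ∈ S', m = g x)) ∧ P m := by
  obtain ⟨y, ⟨hyS, hQy⟩, huniq⟩ := hQ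
  refine ⟨f y, ⟨Or.inl ⟨y, hyS, rfl⟩, (hf y hyS).mpr hQy⟩, ?_⟩
  rintro m ⟨⟨y', hy'S, rfl⟩ | ⟨x, hxS', rfl⟩, hPm⟩
  · rw [huniq y' ⟨hy'S, (hf y' hy'S).mp hPm⟩]
  · exact absurd hPm (hg x hxS')

section Representatives

variable {v : Valuation F Zm0} {a b c : F} {C : ℕ} {R R' : Finset F}
  {P : Matrix (Fin 2) (Fin 2) F → Prop} {x₀ y₀ : F}

lemma existsUnique_rep_of_le (ha : v a ≤ 1) (hb : v b ≤ 1) (hc : v c = 1) (hC : 1 ≤ C)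
    (hN : ∀ y : F, v y ≤ 1 → v (1 - b * y + a * c * y ^ 2) = 1)
    (hR : ∀ r ∈ R, v r ≤ 1) (hRrep : ∀ x : F, v x ≤ 1 → ∃! r, r ∈ R ∧ v (x - r) ≤ ev C)
    (hR' : ∀ r ∈ R', v r ≤ ev 1)
    (hP₁ : ∀ y ∈ R, P (tmat a b c 1 y) ↔ CosetCond v a b c C 1 y x₀ y₀)
    (hP₂ : ∀ x ∈ R', P (tmat a b c x 1) ↔ CosetCond v a b c C x 1 x₀ y₀)
    (hx₀ : x₀ ≠ 0) (hle : v y₀ ≤ v x₀) :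
    ∃! m, ((∃ y ∈ R, m = tmat a b c 1 y) ∨ (∃ x ∈ R', m = tmat a b c x 1)) ∧ P m := by
  have hη : v (y₀ / x₀) ≤ 1 := by rwa [map_div₀, div_le_one₀ (v.pos_iff.mpr hx₀)]
  have hscale (p r : F) : CosetCond v a b c C p r x₀ y₀ ↔ CosetCond v a b c C p r 1 (y₀ / x₀) := by
    rw [← cosetCond_mul_iff (x := 1) (y := y₀ / x₀) hx₀, mul_one, mul_div_cancel₀ _ hx₀]
  refine existsUnique_or_of_forall_iff (fun y hy => ?_) (fun x hx => ?_) (hRrep _ hη)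
  · rw [hP₁ y hy, hscale]
    exact cosetCond_one_left_one_left_iff ha hb hc hC (hR y hy) hη (hN y (hR y hy))
  · rw [hP₂ x hx, hscale]
    exact not_cosetCond_one_right_one_left ha hb hc hC (le_ev_one_iff.mp (hR' x hx)) hη

lemma existsUnique_rep_of_lt (ha : v a ≤ 1) (hb : v b ≤ 1) (hc : v c = 1) (hC : 1 ≤ C)
    (ha₀ : a ≠ 0) (hN : ∀ x : F, v x ≤ ev 1 → v (x ^ 2 - b * x + a * c) = v a)
    (hR : ∀ r ∈ R, v r ≤ 1) (hR' : ∀ r ∈ R', v r ≤ ev 1)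
    (hR'rep : ∀ x : F, v x ≤ ev 1 → ∃! r, r ∈ R' ∧ v (x - r) ≤ ev C * v a)
    (hP₁ : ∀ y ∈ R, P (tmat a b c 1 y) ↔ CosetCond v a b c C 1 y x₀ y₀)
    (hP₂ : ∀ x ∈ R', P (tmat a b c x 1) ↔ CosetCond v a b c C x 1 x₀ y₀)
    (hlt : v x₀ < v y₀) :
    ∃! m, ((∃ y ∈ R, m = tmat a b c 1 y) ∨ (∃ x ∈ R', m = tmat a b c x 1)) ∧ P m := by
  have hy₀ : y₀ ≠ 0 := v.ne_zero_iff.mp (zero_le.trans_lt hlt).ne'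
  have hξ : v (x₀ / y₀) < 1 := by rwa [map_div₀, div_lt_one₀ (v.pos_iff.mpr hy₀)]
  have hscale (p r : F) : CosetCond v a b c C p r x₀ y₀ ↔ CosetCond v a b c C p r (x₀ / y₀) 1 := by
    rw [← cosetCond_mul_iff (x := x₀ / y₀) (y := 1) hy₀, mul_one, mul_div_cancel₀ _ hy₀]
  simp only [or_comm (a := ∃ y ∈ R, _)]
  refine existsUnique_or_of_forall_iff (fun x hx => ?_) (fun y hy => ?_)
    (hR'rep _ (le_ev_one_iff.mpr hξ))
  · rw [hP₂ x hx, hscale]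
    have hx1 := (hR' x hx).trans (ev_lt_one one_pos).le
    exact cosetCond_one_right_one_right_iff hb hC ha₀ hx1 (hN x (hR' x hx))
  · rw [hP₁ y hy, hscale]
    exact not_cosetCond_one_left_one_right ha hb hc hC (hR y hy) hξ

end Representatives

section NormConditions

variable {v : Valuation F Zm0} {a b c : F}

variable (v a b c) in
def NormConditions : Prop :=
  (∀ y : F, v y ≤ 1 → v (1 - b * y + a * c * y ^ 2) = 1) ∧
    ∀ x : F, v x ≤ ev 1 → v (x ^ 2 - b * x + a * c) = v a

lemma normConditions_of_primitive (hc : v c = 1)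
    (hdet : ∀ x y : F, v x ≤ 1 → v y ≤ 1 → (v x = 1 ∨ v y = 1) → v (tmat a b c x y).det = 1) :
    NormConditions v a b c := by
  have ha : v a = 1 := by
    simpa [det_tmat, v.map_mul, hc] using hdet 0 1 (by simp) (by simp) (by simp)
  refine ⟨fun y hy => ?_, fun x hx => ?_⟩
  · rw [← det_tmat_one_left]
    exact hdet 1 y (by simp) hy (by simp)
  · rw [← det_tmat_one_right, ha]
    exact hdet x 1 (hx.trans (ev_lt_one one_pos).le) (by simp) (by simp)

lemma normConditions_of_le_ev_one (hb : v b ≤ ev 1) (ha : v a = ev 1) (hc : v c = 1) :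
    NormConditions v a b c := by
  have hac : v (a * c) = ev 1 := by rw [v.map_mul, ha, hc, mul_one]
  have hev : ev 1 * ev 1 = ev 2 := by rw [← ev_add]; norm_num
  refine ⟨fun y hy => ?_, fun x hx => ?_⟩
  · rw [show 1 - b * y + a * c * y ^ 2 = 1 + (a * c * y ^ 2 - b * y) by ring]
    refine v.map_one_add_of_lt ((v.map_sub_le ?_ ?_).trans_lt (ev_lt_one one_pos))
    · rw [v.map_mul, hac, v.map_pow]
      exact mul_le_of_le_one_right' (pow_le_one' hy 2)
    · rw [v.map_mul]
      exact mul_le_of_le_of_le_one hb hy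
  · have hsmall : v (x ^ 2 - b * x) < v (a * c) := by
      refine hac ▸ (v.map_sub_le ?_ ?_).trans_lt (ev_lt_ev.mpr one_lt_two)
      · rw [v.map_pow, sq, ← hev]
        exact mul_le_mul' hx hx
      · rw [v.map_mul, ← hev]
        exact mul_le_mul' hb hx
    rw [v.map_add_eq_of_lt_right hsmall, hac, ha]

end NormConditions

section QuadraticExtension

variable {L : Type*} [Field L] [Algebra F L] {v : Valuation F Zm0} {vL : Valuation L Zm0}
  {a b c : F} {β : L}

local notation "ι" => algebraMap F L

lemma algebraMap_quadratic_eq_zero [CharZero F] (hc : c ≠ 0) {δ : L}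
    (hδ : δ ^ 2 = ι (b ^ 2 - 4 * (a * c))) (hβ : β = (ι b + δ) / (2 * ι c)) :
    ι c * β ^ 2 - ι b * β + ι a = 0 := by
  have := Algebra.charZero_of_charZero F L
  have hc' : ι c ≠ 0 := (map_ne_zero _).mpr hc
  subst hβ
  field_simp
  simp only [map_sub, map_mul, map_pow, map_ofNat] at hδ
  linear_combination hδ

lemma ne_algebraMap_of_forall_sq_ne [CharZero F] (hc : c ≠ 0) {δ : L}
    (hnonsq : ∀ r : F, r ^ 2 ≠ b ^ 2 - 4 * (a * c)) (hδ : δ ^ 2 = ι (b ^ 2 - 4 * (a * c)))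
    (hβ : β = (ι b + δ) / (2 * ι c)) (r : F) :
    β ≠ ι r := by
  have := Algebra.charZero_of_charZero F L
  have hc' : ι c ≠ 0 := (map_ne_zero _).mpr hc
  intro hr
  apply hnonsq (2 * c * r - b)
  apply (algebraMap F L).injective
  rw [← hδ, map_pow, map_sub, map_mul, map_mul, map_ofNat, ← hr, hβ]
  field_simp
  ring

lemma eq_and_eq_of_add_mul_eq (hβ : ∀ r : F, β ≠ ι r) {s t s' t' : F}
    (h : ι s + ι t * β = ι s' + ι t' * β) : s = s' ∧ t = t' := by
  by_cases ht : t = t'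
  · subst ht
    exact ⟨(algebraMap F L).injective (add_right_cancel h), rfl⟩
  · refine absurd ?_ (hβ ((s - s') / (t' - t)))
    have htt : ι t' - ι t ≠ 0 := by
      rw [← map_sub]
      exact (map_ne_zero _).mpr (sub_ne_zero.mpr (Ne.symm ht))
    rw [map_div₀, map_sub, map_sub, eq_div_iff htt]
    linear_combination -h

lemma algebraMap_det_tmat (hquad : ι c * β ^ 2 - ι b * β + ι a = 0) (x y : F) :
    ι (tmat a b c x y).det = (ι x + ι (-(c * y)) * β) * (ι (x - b * y) + ι (c * y) * β) := by
  simp only [det_tmat, map_add, map_sub, map_mul, map_pow, map_neg]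
  linear_combination ι c * ι y ^ 2 * hquad

lemma valuation_le_of_valuation_add_mul_le (hβ : ∀ r : F, β ≠ ι r)
    (hbasis : ∀ z : L, vL z ≤ 1 → ∃ s t : F, v s ≤ 1 ∧ v t ≤ 1 ∧ z = ι s + ι t * β)
    {ϖ s t : F} (hϖ : ϖ ≠ 0) (h : vL (ι s + ι t * β) ≤ vL (ι ϖ)) :
    v s ≤ v ϖ ∧ v t ≤ v ϖ := by
  have hϖ' : ι ϖ ≠ 0 := (map_ne_zero _).mpr hϖ
  obtain ⟨s', t', hs', ht', hst⟩ := hbasis ((ι s + ι t * β) / ι ϖ) (by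
    rwa [map_div₀, div_le_one₀ (vL.pos_iff.mpr hϖ')])
  rw [div_eq_iff hϖ'] at hst
  obtain ⟨rfl, rfl⟩ := eq_and_eq_of_add_mul_eq hβ (s' := s' * ϖ) (t' := t' * ϖ)
    (by rw [hst]; simp only [map_mul]; ring)
  simp only [v.map_mul]
  exact ⟨mul_le_of_le_one_left' hs', mul_le_of_le_one_left' ht'⟩

lemma valuation_add_mul_eq_one_of_unramified (hβ : ∀ r : F, β ≠ ι r)
    (hbasis : ∀ z : L, vL z ≤ 1 ↔ ∃ s t : F, v s ≤ 1 ∧ v t ≤ 1 ∧ z = ι s + ι t * β)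
    {ϖ : F} (hϖ : v ϖ = ev 1) (hur : vL (ι ϖ) = ev 1) {s t : F} (hs : v s ≤ 1) (ht : v t ≤ 1)
    (hst : v s = 1 ∨ v t = 1) : vL (ι s + ι t * β) = 1 := by
  refine le_antisymm ((hbasis _).mpr ⟨s, t, hs, ht, rfl⟩) (not_lt.mp fun hlt => ?_)
  have hdvd := valuation_le_of_valuation_add_mul_le hβ (fun z => (hbasis z).mp)
    (v.ne_zero_iff.mp (hϖ ▸ ev_ne_zero 1)) (hur ▸ le_ev_one_iff.mpr hlt)
  rw [hϖ] at hdvd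
  rcases hst with h | h
  · exact (ev_lt_one one_pos).not_ge (h ▸ hdvd.1)
  · exact (ev_lt_one one_pos).not_ge (h ▸ hdvd.2)

lemma valuation_det_tmat_eq_one_of_unramified (hβ : ∀ r : F, β ≠ ι r)
    (hbasis : ∀ z : L, vL z ≤ 1 ↔ ∃ s t : F, v s ≤ 1 ∧ v t ≤ 1 ∧ z = ι s + ι t * β)
    (hquad : ι c * β ^ 2 - ι b * β + ι a = 0) (hb : v b ≤ 1) (hc : v c = 1) {e : ℕ} (he : 0 < e)
    (hv : ∀ x : F, vL (ι x) = v x ^ e) {ϖ : F} (hϖ : v ϖ = ev 1) (hur : vL (ι ϖ) = ev 1)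
    {x y : F} (hx : v x ≤ 1) (hy : v y ≤ 1) (hxy : v x = 1 ∨ v y = 1) :
    v (tmat a b c x y).det = 1 := by
  have hcy : v (c * y) = v y := by rw [v.map_mul, hc, one_mul]
  have h₁ : vL (ι x + ι (-(c * y)) * β) = 1 :=
    valuation_add_mul_eq_one_of_unramified hβ hbasis hϖ hur hx (by rwa [v.map_neg, hcy])
      (by rwa [v.map_neg, hcy])
  have h₂ : vL (ι (x - b * y) + ι (c * y) * β) = 1 := by
    refine valuation_add_mul_eq_one_of_unramified hβ hbasis hϖ hur
      (v.map_sub_le hx (by simpa [v.map_mul] using mul_le_one' hb hy)) (hcy ▸ hy) ?_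
    by_cases hy1 : v y = 1
    · exact Or.inr (hcy ▸ hy1)
    · have hx1 : v x = 1 := hxy.resolve_right hy1
      have hby : v (b * y) < v x := by
        rw [hx1, v.map_mul]
        exact (mul_le_of_le_one_left' hb).trans_lt (lt_of_le_of_ne hy hy1)
      exact Or.inl (by rw [v.map_sub_eq_of_lt_left hby, hx1])
  rw [← pow_eq_one_iff_of_nonneg zero_le he.ne', ← hv, algebraMap_det_tmat hquad, vL.map_mul, h₁,
    h₂, mul_one]

lemma valuation_le_ev_one_of_ramified (hβ : ∀ r : F, β ≠ ι r)
    (hbasis : ∀ z : L, vL z ≤ 1 ↔ ∃ s t : F, v s ≤ 1 ∧ v t ≤ 1 ∧ z = ι s + ι t * β)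
    (hquad : ι c * β ^ 2 - ι b * β + ι a = 0) (hb : v b ≤ 1) (hc : v c = 1) {e : ℕ}
    (hv : ∀ x : F, vL (ι x) = v x ^ e) {ϖ : F} (hϖ : v ϖ = ev 1) (hram : vL (ι ϖ) = ev 2)
    (ha : v a = ev 1) : v b ≤ ev 1 := by
  set β' := ι b - ι c * β
  have hprod : β * β' = ι a := by linear_combination -hquad
  have hlow : ∀ s t : F, v t = 1 → ev 1 ≤ vL (ι s + ι t * β) := by
    intro s t ht
    by_contra h
    have hdvd := valuation_le_of_valuation_add_mul_le hβ (fun z => (hbasis z).mp)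
      (v.ne_zero_iff.mp (hϖ ▸ ev_ne_zero 1)) (s := s) (t := t)
      (by rw [hram, show (2 : ℤ) = 1 + 1 by norm_num]; exact le_ev_add_one_iff.mpr (not_le.mp h))
    rw [ht, hϖ] at hdvd
    exact (ev_lt_one one_pos).not_ge hdvd.2
  have hβlow : ev 1 ≤ vL β := by simpa using hlow 0 1 (by simp)
  have hβ'low : ev 1 ≤ vL β' := by
    simpa [β', sub_eq_add_neg] using hlow b (-c) (by simp [hc])
  have hva : vL (ι a) = ev 2 := by rw [hv, ha, ← hϖ, ← hv, hram]
  have hprodv : vL β * vL β' = ev 1 * ev 1 := by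
    rw [← vL.map_mul, hprod, hva, ← ev_add]
    norm_num
  have hev : (0 : Zm0) < ev 1 := zero_lt_iff.mpr (ev_ne_zero 1)
  have hβup : vL β ≤ ev 1 :=
    le_of_mul_le_mul_right (hprodv ▸ mul_le_mul_right hβ'low _) hev
  have hβ'up : vL β' ≤ ev 1 :=
    le_of_mul_le_mul_left (hprodv ▸ mul_le_mul_left hβlow _) hev
  have hbL : vL (ι b) ≤ ev 1 := by
    rw [show ι b = β' + ι c * β by ring]
    exact vL.map_add_le hβ'up (by rw [vL.map_mul, hv, hc, one_pow, one_mul]; exact hβup)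
  refine le_ev_one_iff.mpr (lt_of_le_of_ne hb fun hb1 => ?_)
  rw [hv, hb1, one_pow] at hbL
  exact (ev_lt_one one_pos).not_ge hbL

end QuadraticExtension

theorem stmt15_general
    {L : Type*} [Field L] [CharZero F] [Algebra F L]
    (v : Valuation F Zm0) (vL : Valuation L Zm0)
    (ϖ : F) (hϖ : v ϖ = ev 1)
    (a b c : F)
    (hao : v a ≤ ev 0) (hbo : v b ≤ ev 0) (hc : v c = ev 0)
    (hnonsq : ∀ r : F, r ^ 2 ≠ b ^ 2 - 4 * (a * c))
    (sqd : L) (hsqd : sqd ^ 2 = algebraMap F L (b ^ 2 - 4 * (a * c)))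
    (β : L) (hβ : β = (algebraMap F L b + sqd) / (2 * algebraMap F L c))
    -- {1, β} is an 𝔬-basis of 𝔬_L :
    (hbasis : ∀ z : L, vL z ≤ ev 0 ↔
      ∃ s t : F, v s ≤ ev 0 ∧ v t ≤ ev 0 ∧ z = algebraMap F L s + algebraMap F L t * β)
    -- v_L restricted to F is e·v for the ramification index e ≥ 1 :
    (hcomp : ∃ e : ℕ, 0 < e ∧ ∀ x : F, vL (algebraMap F L x) = (v x) ^ e)
    (n C : ℕ) (hn : 1 ≤ n) (hnC : n ≤ C)
    -- v(a) = va, as an integer :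
    (va : ℤ) (hva : v a = ev va)
    -- either L/F is unramified, or L/F is ramified and v(a) = 1 :
    (hcase : vL (algebraMap F L ϖ) = ev 1 ∨ (vL (algebraMap F L ϖ) = ev 2 ∧ va = 1))
    -- R ⊆ 𝔬 is a set of representatives for 𝔬/𝔭^C :
    (R : Finset F) (hR : ∀ r ∈ R, v r ≤ ev 0)
    (hRrep : ∀ x : F, v x ≤ ev 0 → ∃! r, r ∈ R ∧ v (x - r) ≤ ev C)
    -- R' ⊆ 𝔭 is a set of representatives for 𝔭/𝔭^{C+v(a)} :
    (R' : Finset F) (hR' : ∀ r ∈ R', v r ≤ ev 1)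
    (hR'rep : ∀ x : F, v x ≤ ev 1 → ∃! r, r ∈ R' ∧ v (x - r) ≤ ev ((C : ℤ) + va)) :
    ∀ g ∈ TSet a b c, ∃! m : Matrix (Fin 2) (Fin 2) F,
      ((∃ y ∈ R, m = tmat a b c 1 y) ∨ (∃ x ∈ R', m = tmat a b c x 1))
      ∧ ∃ u ∈ TSet a b c ∩ (ZF F * Kp v n C), g = m * u := by
  rintro _ ⟨x₀, y₀, hN₀, rfl⟩
  rw [ev_zero] at hao hbo hc
  simp only [ev_zero] at hbasis hR hRrep
  obtain ⟨e, he, hv⟩ := hcomp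
  have hc₀ : c ≠ 0 := v.ne_zero_iff.mp (by simp [hc])
  have ha₀ : a ≠ 0 := v.ne_zero_iff.mp (by simp [hva])
  have hβF := ne_algebraMap_of_forall_sq_ne hc₀ hnonsq hsqd hβ
  have hquad := algebraMap_quadratic_eq_zero hc₀ hsqd hβ
  obtain ⟨hN₁, hN₂⟩ : NormConditions v a b c := by
    rcases hcase with hur | ⟨hram, rfl⟩
    · exact normConditions_of_primitive hc fun x y =>
        valuation_det_tmat_eq_one_of_unramified hβF hbasis hquad hbo hc he hv hϖ hur
    · exact normConditions_of_le_ev_one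
        (valuation_le_ev_one_of_ramified hβF hbasis hquad hbo hc hv hϖ hram hva) hva hc
  have hcoset (p r : F) (h : v (tmat a b c p r).det ≠ 0) :=
    exists_eq_tmat_mul_iff hao hbo hc hn hnC (v.ne_zero_iff.mp h) (x := x₀) (y := y₀)
      (by rwa [det_tmat])
  have hP₁ (y : F) (hy : y ∈ R) := hcoset 1 y (by simp [det_tmat_one_left, hN₁ y (hR y hy)])
  have hP₂ (x : F) (hx : x ∈ R') := hcoset x 1 (by simp [det_tmat_one_right, hN₂ x (hR' x hx), ha₀])
  rcases le_or_gt (v y₀) (v x₀) with hle | hlt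
  · refine existsUnique_rep_of_le hao hbo hc (hn.trans hnC) hN₁ hR hRrep hR' hP₁ hP₂ ?_ hle
    rintro rfl
    obtain rfl : y₀ = 0 := by simpa using hle
    simp at hN₀
  · refine existsUnique_rep_of_lt hao hbo hc (hn.trans hnC) ha₀ hN₂ hR hR' ?_ hP₁ hP₂ hlt
    simpa only [ev_add, ← hva] using hR'rep

/-- if L/F is unramified, or ramified with v(a) = 1, then the elements
t(1,y), y ∈ R (R a set of representatives of 𝔬/𝔭^C) together with t(x,1), x ∈ R'
(R' ⊆ 𝔭 a set of representatives of 𝔭/𝔭^{C+v(a)}) form a complete irredundant set of coset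
representatives for T(F) ∩ Z(F)·K' in T(F). -/
theorem stmt15
    {L : Type*} [Field L] [CharZero F] [Algebra F L]
    (v : Valuation F Zm0) (vL : Valuation L Zm0)
    (ϖ : F) (hϖ : v ϖ = ev 1)
    (ϖL : L) (hϖL : vL ϖL = ev 1)
    (a b c : F)
    (hao : v a ≤ ev 0) (hbo : v b ≤ ev 0) (hc : v c = ev 0)
    (hd0 : b ^ 2 - 4 * (a * c) ≠ 0)
    (hnonsq : ∀ r : F, r ^ 2 ≠ b ^ 2 - 4 * (a * c))
    (sqd : L) (hsqd : sqd ^ 2 = algebraMap F L (b ^ 2 - 4 * (a * c)))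
    (hspan : ∀ z : L, ∃ s t : F, z = algebraMap F L s + algebraMap F L t * sqd)
    (β : L) (hβ : β = (algebraMap F L b + sqd) / (2 * algebraMap F L c))
    -- {1, β} is an 𝔬-basis of 𝔬_L :
    (hbasis : ∀ z : L, vL z ≤ ev 0 ↔
      ∃ s t : F, v s ≤ ev 0 ∧ v t ≤ ev 0 ∧ z = algebraMap F L s + algebraMap F L t * β)
    -- v_L restricted to F is e·v for the ramification index e ≥ 1 :
    (hcomp : ∃ e : ℕ, 0 < e ∧ ∀ x : F, vL (algebraMap F L x) = (v x) ^ e)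
    (n C : ℕ) (hn : 1 ≤ n) (hnC : n ≤ C)
    -- v(a) = va, as an integer :
    (va : ℤ) (hva : v a = ev va)
    -- either L/F is unramified, or L/F is ramified and v(a) = 1 :
    (hcase : vL (algebraMap F L ϖ) = ev 1 ∨ (vL (algebraMap F L ϖ) = ev 2 ∧ va = 1))
    -- R ⊆ 𝔬 is a set of representatives for 𝔬/𝔭^C :
    (R : Finset F) (hR : ∀ r ∈ R, v r ≤ ev 0)
    (hRrep : ∀ x : F, v x ≤ ev 0 → ∃! r, r ∈ R ∧ v (x - r) ≤ ev C)
    -- R' ⊆ 𝔭 is a set of representatives for 𝔭/𝔭^{C+v(a)} :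
    (R' : Finset F) (hR' : ∀ r ∈ R', v r ≤ ev 1)
    (hR'rep : ∀ x : F, v x ≤ ev 1 → ∃! r, r ∈ R' ∧ v (x - r) ≤ ev ((C : ℤ) + va)) :
    ∀ g ∈ TSet a b c, ∃! m : Matrix (Fin 2) (Fin 2) F,
      ((∃ y ∈ R, m = tmat a b c 1 y) ∨ (∃ x ∈ R', m = tmat a b c x 1))
      ∧ ∃ u ∈ TSet a b c ∩ (ZF F * Kp v n C), g = m * u :=
  stmt15_general v vL ϖ hϖ a b c hao hbo hc hnonsq sqd hsqd β hβ hbasis hcomp n C hn hnC va hva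
    hcase R hR hRrep R' hR' hR'rep
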